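/- arXiv:1401.7143 — 7 statements merged into one kernel-verified Lean document; each statement's English description precedes it below -/
import Mathlib

section
/- Let p ∈ ℂ*, ζ = e^{2πi/3}, k, m ∈ {0,1,2}, and define the array E by E(1,2,3)=1, E(1,3,2)=p, E(2,1,3)=p·ζ^k, E(2,3,1)=ζ^m, E(3,1,2)=ζ^{-m}, E(3,2,1)=p·ζ^{-k}, and E=0 on non-permutation triples. Then: (a) the modular constants M_n = Σ_{j,l}|E(n,j,l)|² are all equal to 1+|p|²; (b) the diagonal constants p_j = Σ_{a,b} conj(E(j,a,b))·E(a,b,j) are all equal to ζ^m + |p|²·ζ^{-k}; (c) the characteristic constants satisfy c(1,2) = c(2,3) = c(3,1) = ζ^{-(k+m)}, where c(l,n) = (E(j,l,n)/E(j,n,l))·(E(n,l,j)/E(l,n,j)) with j completing {l,n} to {1,2,3}. -/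
open Complex

/-- The array defining the quantum group `A_{p,k,m}(3)` (indices `0,1,2` stand for `1,2,3`). -/
noncomputable def AkmArr (p : ℂ) (k m : ℕ) : Fin 3 → Fin 3 → Fin 3 → ℂ := fun a b c =>
  let ζ : ℂ := Complex.exp (2 * Real.pi * Complex.I / 3)
  if (a, b, c) = ((0 : Fin 3), (1 : Fin 3), (2 : Fin 3)) then 1
  else if (a, b, c) = ((0 : Fin 3), (2 : Fin 3), (1 : Fin 3)) then p
  else if (a, b, c) = ((1 : Fin 3), (0 : Fin 3), (2 : Fin 3)) then p * ζ ^ (k : ℤ)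
  else if (a, b, c) = ((1 : Fin 3), (2 : Fin 3), (0 : Fin 3)) then ζ ^ (m : ℤ)
  else if (a, b, c) = ((2 : Fin 3), (0 : Fin 3), (1 : Fin 3)) then ζ ^ (-(m : ℤ))
  else if (a, b, c) = ((2 : Fin 3), (1 : Fin 3), (0 : Fin 3)) then p * ζ ^ (-(k : ℤ))
  else 0

/-- The modular constant `M_n = ∑_{j,l} |E(n,j,l)|²`. -/
noncomputable def modularConst (E : Fin 3 → Fin 3 → Fin 3 → ℂ) (n : Fin 3) : ℝ :=
  ∑ j : Fin 3, ∑ l : Fin 3, ‖E n j l‖ ^ 2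

/-- The diagonal constant `p_j = ∑_{a,b} conj(E(j,a,b)) · E(a,b,j)`. -/
noncomputable def diagConst (E : Fin 3 → Fin 3 → Fin 3 → ℂ) (j : Fin 3) : ℂ :=
  ∑ a : Fin 3, ∑ b : Fin 3, (starRingEnd ℂ) (E j a b) * E a b j

/-- The characteristic constant `c(l,n)` with third index `j`. -/
noncomputable def charConst (E : Fin 3 → Fin 3 → Fin 3 → ℂ) (l n j : Fin 3) : ℂ :=
  (E j l n / E j n l) * (E n l j / E l n j)

/-! Each slice `E(n,·,·)` has exactly two nonzero entries, of moduli `1` and `|p|`. For the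
diagonal and characteristic constants one only uses that `ζ` is a primitive cube root of unity:
`conj ζ = ζ⁻¹`, and integer powers of `ζ` depend only on the exponent mod 3. -/

open ComplexConjugate

local notation "ζ" => Complex.exp (2 * Real.pi * Complex.I / 3)

theorem zpow_eq_zpow_of_pow_eq_one {G₀ : Type*} [GroupWithZero G₀] {x : G₀} {n : ℕ}
    (hn : n ≠ 0) (hx : x ^ n = 1) {a b : ℤ} (h : a ≡ b [ZMOD n]) : x ^ a = x ^ b := by
  have hx0 : x ≠ 0 := by
    rintro rfl
    simp [zero_pow hn] at hx
  obtain ⟨t, ht⟩ := h.dvd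
  rw [show b = a + n * t by omega, zpow_add₀ hx0, zpow_mul, zpow_natCast, hx, one_zpow, mul_one]

theorem zeta_ne_zero : ζ ≠ 0 :=
  Complex.exp_ne_zero _

theorem norm_zeta : ‖ζ‖ = 1 := by
  simpa using (Complex.isPrimitiveRoot_exp 3 three_ne_zero).norm'_eq_one three_ne_zero

theorem conj_zeta : conj ζ = ζ⁻¹ :=
  (Complex.inv_eq_conj norm_zeta).symm

theorem zeta_zpow_congr {a b : ℤ} (h : a ≡ b [ZMOD 3]) : ζ ^ a = ζ ^ b := by
  refine zpow_eq_zpow_of_pow_eq_one three_ne_zero ?_ h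
  simpa using (Complex.isPrimitiveRoot_exp 3 three_ne_zero).pow_eq_one

theorem modularConst_akmArr (p : ℂ) (k m : ℕ) (n : Fin 3) :
    modularConst (AkmArr p k m) n = 1 + ‖p‖ ^ 2 := by
  fin_cases n <;>
    simp only [modularConst, AkmArr, Fin.sum_univ_three, Fin.isValue, Fin.zero_eta, Fin.mk_one,
      Fin.reduceFinMk, Prod.mk.injEq, Fin.reduceEq, true_and, and_true, false_and, and_false,
      zero_ne_one, one_ne_zero, ↓reduceIte, zpow_neg, zpow_natCast, norm_zero, norm_one, norm_inv,
      norm_pow, Complex.norm_mul, norm_zeta, one_pow, inv_one, mul_one, ne_eq,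
      OfNat.ofNat_ne_zero, not_false_eq_true, zero_pow, zero_add, add_zero]
  all_goals ring

theorem diagConst_akmArr (p : ℂ) (k m : ℕ) (j : Fin 3) :
    diagConst (AkmArr p k m) j = ζ ^ (m : ℤ) + ((‖p‖ : ℝ) : ℂ) ^ 2 * ζ ^ (-(k : ℤ)) := by
  have hnorm := Complex.conj_mul' p
  have hm : ζ ^ (-m : ℤ) * ζ ^ (-m : ℤ) = ζ ^ (m : ℤ) := by
    rw [← zpow_add₀ zeta_ne_zero]
    exact zeta_zpow_congr (by simp only [Int.ModEq]; omega)
  have hk : ζ ^ (k : ℤ) * ζ ^ (k : ℤ) = ζ ^ (-k : ℤ) := by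
    rw [← zpow_add₀ zeta_ne_zero]
    exact zeta_zpow_congr (by simp only [Int.ModEq]; omega)
  fin_cases j <;>
    simp only [diagConst, AkmArr, Fin.sum_univ_three, Fin.isValue, Fin.zero_eta, Fin.mk_one,
      Fin.reduceFinMk, Prod.mk.injEq, Fin.reduceEq, true_and, and_true, false_and, and_false,
      zero_ne_one, one_ne_zero, ↓reduceIte, mul_ite, mul_zero, mul_one, one_mul,
      map_one, map_mul, map_zpow₀, conj_zeta, inv_zpow', neg_neg, zero_add, add_zero]
  · linear_combination ζ ^ (-k : ℤ) * hnorm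
  · linear_combination ζ ^ (-k : ℤ) * hnorm + hm
  · linear_combination ζ ^ (-k : ℤ) * hnorm + conj p * p * hk

theorem charConst_akmArr (p : ℂ) (hp : p ≠ 0) (k m : ℕ) :
    charConst (AkmArr p k m) 0 1 2 = ζ ^ (-((k : ℤ) + m)) ∧
      charConst (AkmArr p k m) 1 2 0 = ζ ^ (-((k : ℤ) + m)) ∧
      charConst (AkmArr p k m) 2 0 1 = ζ ^ (-((k : ℤ) + m)) := by
  refine ⟨?_, ?_, ?_⟩ <;>
  · simp only [charConst, AkmArr, Fin.isValue, Prod.mk.injEq, Fin.reduceEq, zero_ne_one,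
      one_ne_zero, and_self, and_true, and_false, ↓reduceIte, div_one, one_div, neg_add_rev]
    field_simp
    simp only [← zpow_add₀ zeta_ne_zero]
    exact zeta_zpow_congr (by simp only [Int.ModEq]; omega)

theorem stmt2_general (p : ℂ) (hp : p ≠ 0) (k m : ℕ) :
    (∀ n : Fin 3, modularConst (AkmArr p k m) n = 1 + ‖p‖ ^ 2) ∧
    (∀ j : Fin 3, diagConst (AkmArr p k m) j =
        Complex.exp (2 * Real.pi * Complex.I / 3) ^ (m : ℤ) +
          ((‖p‖ : ℝ) : ℂ) ^ 2 * Complex.exp (2 * Real.pi * Complex.I / 3) ^ (-(k : ℤ))) ∧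
    (charConst (AkmArr p k m) 0 1 2 = Complex.exp (2 * Real.pi * Complex.I / 3) ^ (-((k : ℤ) + m)) ∧
      charConst (AkmArr p k m) 1 2 0 = Complex.exp (2 * Real.pi * Complex.I / 3) ^ (-((k : ℤ) + m)) ∧
      charConst (AkmArr p k m) 2 0 1 = Complex.exp (2 * Real.pi * Complex.I / 3) ^ (-((k : ℤ) + m))) :=
  ⟨modularConst_akmArr p k m, diagConst_akmArr p k m, charConst_akmArr p hp k m⟩

theorem stmt2 (p : ℂ) (hp : p ≠ 0) (k m : ℕ) (hk : k < 3) (hm : m < 3) :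
    (∀ n : Fin 3, modularConst (AkmArr p k m) n = 1 + ‖p‖ ^ 2) ∧
    (∀ j : Fin 3, diagConst (AkmArr p k m) j =
        Complex.exp (2 * Real.pi * Complex.I / 3) ^ (m : ℤ) +
          ((‖p‖ : ℝ) : ℂ) ^ 2 * Complex.exp (2 * Real.pi * Complex.I / 3) ^ (-(k : ℤ))) ∧
    (charConst (AkmArr p k m) 0 1 2 = Complex.exp (2 * Real.pi * Complex.I / 3) ^ (-((k : ℤ) + m)) ∧
      charConst (AkmArr p k m) 1 2 0 = Complex.exp (2 * Real.pi * Complex.I / 3) ^ (-((k : ℤ) + m)) ∧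
      charConst (AkmArr p k m) 2 0 1 = Complex.exp (2 * Real.pi * Complex.I / 3) ^ (-((k : ℤ) + m))) :=
  stmt2_general p hp k m
end

section
/- Let A be a unital C*-algebra (or any *-ring in which the conclusion makes sense), let u ∈ A, and let λ be a nonzero real number. Assume u²u* = λu and u*u² = u²u*. Then u is normal, i.e., uu* = u*u. -/
theorem stmt4 (A : Type*) [NormedRing A] [StarRing A] [CStarRing A]
    [NormedAlgebra ℂ A] [StarModule ℂ A] [CompleteSpace A]
    (u : A) (lam : ℝ) (hlam : lam ≠ 0)
    (h1 : u ^ 2 * star u = (lam : ℂ) • u)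
    (h2 : star u * u ^ 2 = u ^ 2 * star u) :
    u * star u = star u * u := by
  have h1' : u * star u ^ 2 = (lam : ℂ) • star u := by
    have := congrArg star h1
    simpa [star_smul, mul_pow, pow_two, mul_assoc, starRingEnd_apply] using this
  have key : (lam : ℂ) • (u * star u) = (lam : ℂ) • (star u * u) := by
    calc (lam : ℂ) • (u * star u) = u * ((lam : ℂ) • star u) := by
          rw [mul_smul_comm]
      _ = u * (u * star u ^ 2) := by rw [h1']
      _ = u ^ 2 * star u ^ 2 := by noncomm_ring
      _ = (star u * u ^ 2) * star u := by rw [h2]; noncomm_ring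
      _ = star u * ((lam : ℂ) • u) := by rw [← h1]; noncomm_ring
      _ = (lam : ℂ) • (star u * u) := by rw [mul_smul_comm]
  have hl : (lam : ℂ) ≠ 0 := by exact_mod_cast hlam
  exact smul_right_injective A hl key
end

section
/- Let r ∈ ℂ with r ≠ 0 and |r| ≠ 1, and suppose the complex number (conj(r)·|r|² − r²)/(r² − conj(r)) is a positive real number t. Then r³ is a positive real number (equivalently r = |r|·ζ^m for some m ∈ {0,1,2}, where ζ = e^{2πi/3}), and t = |r|. -/
/-!
Clearing the denominator turns the hypothesis into `conj r * (|r|² + t) = r² * (1 + t)`, whose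
coefficients are positive reals. Taking norms gives `|r| (|r|² + t) = |r|² (1 + t)`, i.e.
`|r| (|r| - 1) (|r| - t) = 0`, so `t = |r|`; cancelling `1 + t` then leaves `conj r * |r| = r²`.
Multiplying by `r` gives `r³ = |r|³`, so `r / |r|` is a cube root of unity.
-/

open ComplexConjugate

namespace Complex

lemma sq_sub_conj_ne_zero {r : ℂ} (hr : r ≠ 0) (h1 : ‖r‖ ≠ 1) : r ^ 2 - conj r ≠ 0 := by
  intro h0
  have hnorm : ‖r‖ ^ 2 = ‖r‖ := by
    simpa [norm_pow, norm_conj] using congrArg norm (sub_eq_zero.mp h0)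
  have : ‖r‖ * (‖r‖ - 1) = 0 := by linear_combination hnorm
  rcases mul_eq_zero.mp this with h | h
  · exact hr (norm_eq_zero.mp h)
  · exact h1 (by linarith)

lemma eq_norm_of_conj_mul_eq_sq_mul {r : ℂ} {t : ℝ} (hr : r ≠ 0) (h1 : ‖r‖ ≠ 1)
    (ht : 0 ≤ t)
    (h : conj r * ((‖r‖ : ℂ) ^ 2 + t) = r ^ 2 * (1 + t)) : t = ‖r‖ := by
  have hnorm : ‖r‖ * (‖r‖ ^ 2 + t) = ‖r‖ ^ 2 * (1 + t) := by
    have := congrArg norm h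
    rw [show (‖r‖ : ℂ) ^ 2 + t = ((‖r‖ ^ 2 + t : ℝ) : ℂ) by push_cast; ring,
      show (1 : ℂ) + t = ((1 + t : ℝ) : ℂ) by push_cast; ring] at this
    rwa [norm_mul, norm_mul, norm_conj, norm_pow, norm_real, norm_real,
      Real.norm_of_nonneg (by positivity), Real.norm_of_nonneg (by positivity)] at this
  have hfac : ‖r‖ * ((‖r‖ - 1) * (‖r‖ - t)) = 0 := by linear_combination hnorm
  rcases mul_eq_zero.mp hfac with h0 | h0
  · exact absurd (norm_eq_zero.mp h0) hr
  rcases mul_eq_zero.mp h0 with h0 | h0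
  · exact absurd (by linarith) h1
  · linarith

lemma pow_three_eq_of_conj_mul_norm_eq_sq {r : ℂ} (h : conj r * ‖r‖ = r ^ 2) :
    r ^ 3 = (‖r‖ : ℂ) ^ 3 := by
  linear_combination (‖r‖ : ℂ) * mul_conj' r - r * h

lemma exists_eq_norm_mul_exp_pow_of_pow_eq {n : ℕ} [NeZero n] {r : ℂ}
    (h : r ^ n = (‖r‖ : ℂ) ^ n) :
    ∃ m < n, r = ‖r‖ * exp (2 * Real.pi * I / n) ^ m := by
  rcases eq_or_ne r 0 with rfl | hr
  · exact ⟨0, Nat.pos_of_neZero n, by simp⟩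
  have hnorm : (‖r‖ : ℂ) ≠ 0 := ofReal_ne_zero.mpr (norm_ne_zero_iff.mpr hr)
  have hroot : (r / ‖r‖) ^ n = 1 := by rw [div_pow, h, div_self (pow_ne_zero n hnorm)]
  obtain ⟨m, hm, hexp⟩ := (isPrimitiveRoot_exp n (NeZero.ne n)).eq_pow_of_pow_eq_one hroot
  exact ⟨m, hm, by rw [hexp, mul_div_cancel₀ r hnorm]⟩

end Complex

theorem stmt7 (r : ℂ) (hr : r ≠ 0) (habs : ‖r‖ ≠ 1)
    (t : ℝ) (ht : 0 < t)
    (h : ((starRingEnd ℂ) r * (‖r‖ : ℂ) ^ 2 - r ^ 2) /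
        (r ^ 2 - (starRingEnd ℂ) r) = (t : ℂ)) :
    (∃ m : ℕ, m < 3 ∧
        r = (‖r‖ : ℂ) * Complex.exp (2 * Real.pi * Complex.I / 3) ^ m) ∧
      t = ‖r‖ := by
  rw [div_eq_iff (Complex.sq_sub_conj_ne_zero hr habs)] at h
  have hcleared : conj r * ((‖r‖ : ℂ) ^ 2 + t) = r ^ 2 * (1 + t) := by linear_combination h
  have hts := Complex.eq_norm_of_conj_mul_eq_sq_mul hr habs ht.le hcleared
  subst hts
  have hconj : conj r * ‖r‖ = r ^ 2 := by
    have h1t : (1 + ‖r‖ : ℂ) ≠ 0 := by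
      exact_mod_cast (by positivity : (1 + ‖r‖ : ℝ) ≠ 0)
    exact mul_left_cancel₀ h1t (by linear_combination hcleared)
  obtain ⟨m, hm, hpolar⟩ := Complex.exists_eq_norm_mul_exp_pow_of_pow_eq
    (Complex.pow_three_eq_of_conj_mul_norm_eq_sq hconj)
  exact ⟨⟨m, hm, by exact_mod_cast hpolar⟩, rfl⟩
end

section
/- Let p, q, r, s, t ∈ ℂ* satisfy t = p·r, s = p·r/q, and r + conj(p)·t = p·conj(q) + conj(r)·s = conj(s) + conj(t)·q. Then |q| = |p| or |q| = 1/|p|, and moreover |r| = 1 or |r| = |q|². -/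
/-!
Clearing denominators, the first equation becomes `r q (1 + |p|²) = p (|q|² + |r|²)` and the
equality of its outer members becomes `r q̄ (1 + |p|²) = p̄ r̄ (1 + |q|²)`. Taking absolute values
gives, with `a = |p|`, `b = |q|`, `c = |r|`, the real equations `b c (1 + a²) = a (b² + c²)` and
`b (1 + a²) = a (1 + b²)`. The second factors as `(b - a)(1 - a b) = 0`; substituting it into the
first leaves `(c - 1)(c - b²) = 0`.
-/

open ComplexConjugate

lemma eq_or_eq_one_div_of_mul_one_add_sq_eq {a b : ℝ} (ha : a ≠ 0)
    (h : b * (1 + a ^ 2) = a * (1 + b ^ 2)) : b = a ∨ b = 1 / a := by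
  have hfac : (b - a) * (a * b - 1) = 0 := by linear_combination -h
  rcases mul_eq_zero.mp hfac with hab | hab
  · exact .inl (by linarith)
  · exact .inr (by field_simp; linarith)

lemma eq_one_or_eq_sq_of_mul_one_add_sq_eq {a b c : ℝ} (ha : a ≠ 0)
    (h₁ : b * c * (1 + a ^ 2) = a * (b ^ 2 + c ^ 2)) (h₂ : b * (1 + a ^ 2) = a * (1 + b ^ 2)) :
    c = 1 ∨ c = b ^ 2 := by
  have hfac : a * ((c - 1) * (c - b ^ 2)) = 0 := by linear_combination c * h₂ - h₁
  rcases mul_eq_zero.mp ((mul_eq_zero.mp hfac).resolve_left ha) with hc | hc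
  · exact .inl (by linarith)
  · exact .inr (by linarith)

lemma Complex.norm_mul_eq_of_mul_ofReal_eq {z w : ℂ} {x y : ℝ} (hx : 0 ≤ x) (hy : 0 ≤ y)
    (h : z * x = w * y) : ‖z‖ * x = ‖w‖ * y := by
  simpa [abs_of_nonneg hx, abs_of_nonneg hy] using congrArg norm h

lemma Complex.mul_one_add_sq_norm_eq {p q r : ℂ} (hq : q ≠ 0)
    (h : r + conj p * (p * r) = p * conj q + conj r * (p * r / q)) :
    r * q * ((1 + ‖p‖ ^ 2 : ℝ) : ℂ) = p * ((‖q‖ ^ 2 + ‖r‖ ^ 2 : ℝ) : ℂ) := by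
  push_cast
  rw [← Complex.mul_conj', ← Complex.mul_conj', ← Complex.mul_conj']
  field_simp at h
  linear_combination h

lemma Complex.mul_conj_mul_one_add_sq_norm_eq {p q r : ℂ} (hq : q ≠ 0)
    (h : r + conj p * (p * r) = conj (p * r / q) + conj (p * r) * q) :
    r * conj q * ((1 + ‖p‖ ^ 2 : ℝ) : ℂ) = conj p * conj r * ((1 + ‖q‖ ^ 2 : ℝ) : ℂ) := by
  have hq' : conj q ≠ 0 := by simpa using hq
  push_cast
  rw [← Complex.mul_conj', ← Complex.mul_conj']
  simp only [map_div₀, map_mul] at h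
  field_simp at h
  linear_combination h

theorem stmt8_general (p q r s t : ℂ) (hp : p ≠ 0) (hq : q ≠ 0) (hr : r ≠ 0)
    (h1 : t = p * r) (h2 : s = p * r / q)
    (h3 : r + (starRingEnd ℂ) p * t = p * (starRingEnd ℂ) q + (starRingEnd ℂ) r * s)
    (h4 : p * (starRingEnd ℂ) q + (starRingEnd ℂ) r * s =
        (starRingEnd ℂ) s + (starRingEnd ℂ) t * q) :
    (‖q‖ = ‖p‖ ∨ ‖q‖ = 1 / ‖p‖) ∧
      (‖r‖ = 1 ∨ ‖r‖ = ‖q‖ ^ 2) := by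
  subst h1 h2
  have ha : ‖p‖ ≠ 0 := norm_ne_zero_iff.mpr hp
  have hE₁ := Complex.norm_mul_eq_of_mul_ofReal_eq (by positivity) (by positivity)
    (Complex.mul_one_add_sq_norm_eq hq h3)
  have hE₂ := Complex.norm_mul_eq_of_mul_ofReal_eq (by positivity) (by positivity)
    (Complex.mul_conj_mul_one_add_sq_norm_eq hq (h3.trans h4))
  simp only [norm_mul, Complex.norm_conj] at hE₁ hE₂
  have hE₂' : ‖q‖ * (1 + ‖p‖ ^ 2) = ‖p‖ * (1 + ‖q‖ ^ 2) := by
    have hc : ‖r‖ ≠ 0 := norm_ne_zero_iff.mpr hr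
    exact mul_left_cancel₀ hc (by linear_combination hE₂)
  exact ⟨eq_or_eq_one_div_of_mul_one_add_sq_eq ha hE₂',
    eq_one_or_eq_sq_of_mul_one_add_sq_eq ha (by linear_combination hE₁) hE₂'⟩

theorem stmt8 (p q r s t : ℂ) (hp : p ≠ 0) (hq : q ≠ 0) (hr : r ≠ 0)
    (hs : s ≠ 0) (ht : t ≠ 0)
    (h1 : t = p * r) (h2 : s = p * r / q)
    (h3 : r + (starRingEnd ℂ) p * t = p * (starRingEnd ℂ) q + (starRingEnd ℂ) r * s)
    (h4 : p * (starRingEnd ℂ) q + (starRingEnd ℂ) r * s =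
        (starRingEnd ℂ) s + (starRingEnd ℂ) t * q) :
    (‖q‖ = ‖p‖ ∨ ‖q‖ = 1 / ‖p‖) ∧
      (‖r‖ = 1 ∨ ‖r‖ = ‖q‖ ^ 2) :=
  stmt8_general p q r s t hp hq hr h1 h2 h3 h4
end

section
/- Let E : S₃ → ℂ* be a nowhere-zero function on permutations of {1,2,3}, and let σ ∈ S₃ be a transposition exchanging r and k while fixing i. If for every triple (k',r',i') ∈ S₃ the compatibility condition E(σ(k'),σ(r'),σ(i'))/E(k',r',i') = E(σ(i'),σ(k'),σ(r'))/E(i',k',r') holds, then the characteristic constant c(r,k) = (E(i,k,r)/E(i,r,k))·(E(r,k,i)/E(k,r,i)) equals 1. -/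
theorem stmt9 (E : Fin 3 → Fin 3 → Fin 3 → ℂ)
    (hE : ∀ a b c : Fin 3, a ≠ b → b ≠ c → a ≠ c → E a b c ≠ 0)
    (r k i : Fin 3) (hrk : r ≠ k) (hki : k ≠ i) (hri : r ≠ i)
    (hcompat : ∀ k' r' i' : Fin 3, k' ≠ r' → r' ≠ i' → k' ≠ i' →
      E (Equiv.swap r k k') (Equiv.swap r k r') (Equiv.swap r k i') / E k' r' i' =
        E (Equiv.swap r k i') (Equiv.swap r k k') (Equiv.swap r k r') / E i' k' r') :
    (E i k r / E i r k) * (E r k i / E k r i) = 1 := by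
  have h := hcompat k r i hrk.symm hri hki
  rw [Equiv.swap_apply_left, Equiv.swap_apply_right,
    Equiv.swap_apply_of_ne_of_ne hri.symm hki.symm] at h
  have h1 := hE i k r hki.symm hrk.symm hri.symm
  have h2 := hE i r k hri.symm hrk hki.symm
  have h3 := hE k r i hrk.symm hri hki
  rw [h]
  field_simp
end

section
/- Let A be a unital *-algebra, μ ∈ ℂ*, v ∈ A unitary (vv* = v*v = 1), and a, b, c, d ∈ A satisfying: aa* + bb* = 1, b*b + d*d = 1, cc* + dd* = 1, a*a + c*c = 1, ac* + bd* = 0, a*b + c*d = 0, together with ad + μ·bc = v* = da + μ⁻¹·cb, ab + μ·ba = 0, and cd + μ·dc = 0. Then d = a*v* and b = μ·c*v*. -/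
theorem stmt13 (A : Type*) [Ring A] [StarRing A] [Algebra ℂ A] [StarModule ℂ A]
    (μ : ℂ) (hμ : μ ≠ 0) (v a b c d : A)
    (hv : v * star v = 1) (hv' : star v * v = 1)
    (hA : a * star a + b * star b = 1)
    (hB : star b * b + star d * d = 1)
    (hC : c * star c + d * star d = 1)
    (hD : star a * a + star c * c = 1)
    (hE : a * star c + b * star d = 0)
    (hF : star a * b + star c * d = 0)
    (hG1 : a * d + μ • (b * c) = star v)
    (hG2 : d * a + μ⁻¹ • (c * b) = star v)
    (hH1 : a * b + μ • (b * a) = 0)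
    (hH2 : c * d + μ • (d * c) = 0) :
    d = star a * star v ∧ b = μ • (star c * star v) := by
  have haa : star a * a = 1 - star c * c := eq_sub_of_add_eq hD
  have hcc : star c * c = 1 - star a * a := eq_sub_of_add_eq' hD
  have hab : star a * b = -(star c * d) := by
    rwa [add_eq_zero_iff_eq_neg] at hF
  have hcd : star c * d = -(star a * b) := by
    rw [hab, neg_neg]
  have hdc : d * c = μ⁻¹ • -(c * d) := by
    have h : μ • (d * c) = -(c * d) := by
      have := hH2
      rw [add_eq_zero_iff_neg_eq] at this
      exact this.symm
    rw [← h, inv_smul_smul₀ hμ]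
  have hba : b * a = μ⁻¹ • -(a * b) := by
    have h : μ • (b * a) = -(a * b) := by
      have := hH1
      rw [add_eq_zero_iff_neg_eq] at this
      exact this.symm
    rw [← h, inv_smul_smul₀ hμ]
  have t1 : (-(star c * d)) * c = μ⁻¹ • (star c * (c * d)) := by
    rw [neg_mul, mul_assoc, hdc, mul_smul_comm, mul_neg, smul_neg, neg_neg]
  have t2 : (-(star a * b)) * a = μ⁻¹ • (star a * (a * b)) := by
    rw [neg_mul, mul_assoc, hba, mul_smul_comm, mul_neg, smul_neg, neg_neg]
  constructor
  · have key : star a * star v = d := by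
      calc star a * star v
          = star a * (a * d + μ • (b * c)) := by rw [hG1]
        _ = (star a * a) * d + μ • ((star a * b) * c) := by
            rw [mul_add, mul_smul_comm, mul_assoc, mul_assoc]
        _ = (1 - star c * c) * d + μ • ((-(star c * d)) * c) := by rw [haa, hab]
        _ = (1 - star c * c) * d + μ • (μ⁻¹ • (star c * (c * d))) := by rw [t1]
        _ = d := by rw [smul_inv_smul₀ hμ, sub_mul, one_mul, mul_assoc]; abel
    exact key.symm
  · have key : star c * star v = μ⁻¹ • b := by
      calc star c * star v
          = star c * (d * a + μ⁻¹ • (c * b)) := by rw [hG2]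
        _ = (star c * d) * a + μ⁻¹ • ((star c * c) * b) := by
            rw [mul_add, mul_smul_comm, mul_assoc, mul_assoc]
        _ = (-(star a * b)) * a + μ⁻¹ • ((1 - star a * a) * b) := by rw [hcd, hcc]
        _ = μ⁻¹ • (star a * (a * b)) + μ⁻¹ • ((1 - star a * a) * b) := by rw [t2]
        _ = μ⁻¹ • b := by
            rw [← smul_add, sub_mul, one_mul, mul_assoc]
            congr 1
            abel
    rw [key, smul_inv_smul₀ hμ]
end

section
/- Let A be a unital C*-algebra, let (u_{ij})_{i,j=1,2,3} be elements of A such that the matrix u = [u_{ij}] is unitary (Σ_s u_{is}u_{js}* = δ_{ij}·1 = Σ_s u_{si}*u_{sj}), let M₁, M₂, M₃ be strictly positive reals with Σ_s M_s·u_{sa}·u_{sb}* = δ_{ab}·M_a·1 for all a, b, and suppose each u_{ij} is a partial isometry and u_{ri}*·u_{si} = 0 whenever r ≠ s. Then for all r, b ∈ {1,2,3}: M_r·u_{rb} = M_b·u_{rb}; in particular, if M_r ≠ M_b then u_{rb} = 0. -/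
theorem stmt19 (A : Type*) [NormedRing A] [StarRing A] [CStarRing A]
    [NormedAlgebra ℂ A] [CompleteSpace A]
    (u : Fin 3 → Fin 3 → A)
    (hU1 : ∀ i j : Fin 3, ∑ s : Fin 3, u i s * star (u j s) =
      if i = j then (1 : A) else 0)
    (hU2 : ∀ i j : Fin 3, ∑ s : Fin 3, star (u s i) * u s j =
      if i = j then (1 : A) else 0)
    (M : Fin 3 → ℝ) (hM : ∀ n, 0 < M n)
    (hmod : ∀ a b : Fin 3, ∑ s : Fin 3, (M s : ℂ) • (u s a * star (u s b)) =
      if a = b then (M a : ℂ) • (1 : A) else 0)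
    (hpi : ∀ i j : Fin 3, u i j * star (u i j) * u i j = u i j)
    (hcol : ∀ r s i : Fin 3, r ≠ s → star (u r i) * u s i = 0) :
    ∀ r b : Fin 3, (M r : ℂ) • u r b = (M b : ℂ) • u r b ∧
      (M r ≠ M b → u r b = 0) := by
  intro r b
  have h := hmod b b
  rw [if_pos rfl] at h
  have h2 := congrArg (fun x => star (u r b) * x * u r b) h
  simp only [Finset.mul_sum, Finset.sum_mul, mul_smul_comm, smul_mul_assoc, mul_one] at h2
  rw [Finset.sum_eq_single r] at h2
  · -- h2 : (M r) • (star (u r b) * (u r b * star (u r b)) * u r b) = (M b) • (star (u r b) * u r b)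
    have hp : star (u r b) * (u r b * star (u r b)) * u r b = star (u r b) * u r b := by
      rw [mul_assoc, hpi r b]
    rw [hp] at h2
    have h3 := congrArg (fun x => u r b * x) h2
    simp only [mul_smul_comm] at h3
    rw [← mul_assoc, hpi r b] at h3
    refine ⟨h3, fun hne => ?_⟩
    have h4 : ((M r : ℂ) - (M b : ℂ)) • u r b = 0 := by
      rw [sub_smul, h3, sub_self]
    rcases smul_eq_zero.mp h4 with h5 | h5
    · exact absurd (Complex.ofReal_inj.mp (sub_eq_zero.mp h5)) hne
    · exact h5
  · intro s _ hs
    rw [← mul_assoc, hcol r s b (Ne.symm hs), zero_mul, zero_mul, smul_zero]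
  · intro hr
    exact absurd (Finset.mem_univ r) hr
end
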